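/- arXiv:2504.09256 — 7 statements merged into one kernel-verified Lean document; each statement's English description precedes it below -/
import Mathlib

section
/- Let R = ℤ[t^{±1}] be the ring of Laurent polynomials over ℤ and t ∈ R its distinguished variable. Let A ∈ M_2(R) be the matrix with rows (0, t) and (1, 0). If B ∈ M_2(R) is invertible and A·B = B·A, then there exist a, c ∈ R such that B is the matrix with rows (a, c·t) and (c, a). -/
open Matrix LaurentPolynomial

theorem Matrix.exists_eq_of_antidiag_mul_comm {R : Type*} [Semiring R] (r : R)
    (B : Matrix (Fin 2) (Fin 2) R) (h : !![0, r; 1, 0] * B = B * !![0, r; 1, 0]) :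
    ∃ a c : R, B = !![a, c * r; c, a] := by
  rw [B.eta_fin_two, mul_fin_two, mul_fin_two] at h
  simp only [EmbeddingLike.apply_eq_iff_eq, vecCons_inj, zero_mul, one_mul, mul_zero, mul_one,
    zero_add, add_zero] at h
  obtain ⟨-, ⟨hdiag, hoffdiag, -⟩, -⟩ := h
  exact ⟨B 0 0, B 1 0, B.eta_fin_two.trans (by rw [← hdiag, hoffdiag])⟩

theorem extension_standard_rep_SB2_general
    (B : Matrix (Fin 2) (Fin 2) (LaurentPolynomial ℤ))
    (hcomm : !![(0 : LaurentPolynomial ℤ), T 1; 1, 0] * B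
        = B * !![(0 : LaurentPolynomial ℤ), T 1; 1, 0]) :
    ∃ a c : LaurentPolynomial ℤ, B = !![a, c * T 1; c, a] :=
  exists_eq_of_antidiag_mul_comm (T 1) B hcomm

/-- The form of all extensions of the standard representation of `B₂` to the
singular braid group `SB₂`: any invertible matrix `B` over `ℤ[t^{±1}]` commuting
with the standard matrix `!![0, t; 1, 0]` has the form `!![a, c*t; c, a]`. -/
theorem extension_standard_rep_SB2
    (B : Matrix (Fin 2) (Fin 2) (LaurentPolynomial ℤ))
    (hB : IsUnit B)
    (hcomm : !![(0 : LaurentPolynomial ℤ), T 1; 1, 0] * B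
        = B * !![(0 : LaurentPolynomial ℤ), T 1; 1, 0]) :
    ∃ a c : LaurentPolynomial ℤ, B = !![a, c * T 1; c, a] :=
  extension_standard_rep_SB2_general B hcomm
end

section
/- Let R = ℤ[t^{±1}] be the ring of Laurent polynomials over ℤ and t ∈ R its distinguished variable, let n ≥ 2, and let a, c ∈ R. For 1 ≤ i ≤ n−1, let S_i ∈ M_n(R) be the matrix with (i,i+1)-entry t, (i+1,i)-entry 1, (k,k)-entry 1 for every k ∉ {i,i+1}, and all other entries 0, and let N_i ∈ M_n(R) be the matrix with (i,i)- and (i+1,i+1)-entries a, (i,i+1)-entry c·t, (i+1,i)-entry c, (k,k)-entry 1 for every k ∉ {i,i+1}, and all other entries 0. Then all defining relations of the singular braid group SB_n hold: S_i·S_{i+1}·S_i = S_{i+1}·S_i·S_{i+1} for 1 ≤ i ≤ n−2; S_i·S_j = S_j·S_i, N_i·N_j = N_j·N_i, and N_i·S_j = S_j·N_i whenever |i−j| ≥ 2; S_i·N_i = N_i·S_i for 1 ≤ i ≤ n−1; and S_i·S_{i+1}·N_i = N_{i+1}·S_i·S_{i+1} and S_{i+1}·S_i·N_{i+1} = N_i·S_{i+1}·S_i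 for 1 ≤ i ≤ n−2. Moreover, if a² − t·c² is a unit of R then each N_i is invertible. -/
open Matrix LaurentPolynomial

/-- The image of the braid generator under the standard (Tong–Yang–Ma)
representation (0-indexed `i`): `(i,i+1)`-entry `t`, `(i+1,i)`-entry `1`,
diagonal entries `1` outside `{i, i+1}`, all other entries `0`. -/
def stdS (n : ℕ) {R : Type*} [CommRing R] (t : R) (i : ℕ) : Matrix (Fin n) (Fin n) R :=
  Matrix.of fun k l =>
    if (k : ℕ) = i ∧ (l : ℕ) = i + 1 then t
    else if (k : ℕ) = i + 1 ∧ (l : ℕ) = i then 1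
    else if k = l ∧ (k : ℕ) ≠ i ∧ (k : ℕ) ≠ i + 1 then 1
    else 0

/-- The image of the singular generator (0-indexed `i`): `(i,i)`- and
`(i+1,i+1)`-entries `a`, `(i,i+1)`-entry `c*t`, `(i+1,i)`-entry `c`,
diagonal entries `1` outside `{i, i+1}`, all other entries `0`. -/
def stdN (n : ℕ) {R : Type*} [CommRing R] (a c t : R) (i : ℕ) : Matrix (Fin n) (Fin n) R :=
  Matrix.of fun k l =>
    if (k : ℕ) = i ∧ (l : ℕ) = i then a
    else if (k : ℕ) = i + 1 ∧ (l : ℕ) = i + 1 then a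
    else if (k : ℕ) = i ∧ (l : ℕ) = i + 1 then c * t
    else if (k : ℕ) = i + 1 ∧ (l : ℕ) = i then c
    else if k = l then 1
    else 0

/-- The Laurent variable `t` in `ℤ[t^{±1}]`. -/
noncomputable def tL : LaurentPolynomial ℤ := T 1

set_option maxHeartbeats 1000000

namespace SBnAux

/-- Diagonal idempotent supported on coordinates `i`, `i+1`. -/
def dD (n : ℕ) (R : Type*) [CommRing R] (i : ℕ) : Matrix (Fin n) (Fin n) R :=
  Matrix.of fun k l => if k = l ∧ ((k : ℕ) = i ∨ (k : ℕ) = i + 1) then 1 else 0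

variable {R : Type*} [CommRing R] {n : ℕ}

lemma stdS_mul_apply (t : R) (i : ℕ) (h : i + 1 < n) (B : Matrix (Fin n) (Fin n) R)
    (k l : Fin n) :
    (stdS n t i * B) k l =
      if (k : ℕ) = i then t * B ⟨i + 1, h⟩ l
      else if (k : ℕ) = i + 1 then B ⟨i, by omega⟩ l
      else B k l := by
  rw [Matrix.mul_apply]
  split_ifs with h1 h2
  · rw [Finset.sum_eq_single (⟨i + 1, h⟩ : Fin n)]
    · simp [stdS, h1]
    · intro m _ hm
      have : (m : ℕ) ≠ i + 1 := fun hc => hm (Fin.ext hc)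
      simp [stdS, h1, this]
    · simp
  · rw [Finset.sum_eq_single (⟨i, by omega⟩ : Fin n)]
    · simp [stdS, h1, h2]
    · intro m _ hm
      have : (m : ℕ) ≠ i := fun hc => hm (Fin.ext hc)
      simp [stdS, h1, h2, this]
    · simp
  · rw [Finset.sum_eq_single k]
    · simp [stdS, h1, h2]
    · intro m _ hm
      simp [stdS, h1, h2, (Ne.symm hm)]
    · simp

lemma mul_stdS_apply (t : R) (i : ℕ) (h : i + 1 < n) (B : Matrix (Fin n) (Fin n) R)
    (k l : Fin n) :
    (B * stdS n t i) k l =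
      if (l : ℕ) = i then B k ⟨i + 1, h⟩
      else if (l : ℕ) = i + 1 then B k ⟨i, by omega⟩ * t
      else B k l := by
  rw [Matrix.mul_apply]
  split_ifs with h1 h2
  · rw [Finset.sum_eq_single (⟨i + 1, h⟩ : Fin n)]
    · simp [stdS, h1]
    · intro m _ hm
      have : (m : ℕ) ≠ i + 1 := fun hc => hm (Fin.ext hc)
      simp [stdS, h1, this]
      intro h3; omega
    · simp
  · rw [Finset.sum_eq_single (⟨i, by omega⟩ : Fin n)]
    · simp [stdS, h1, h2, mul_comm]
    · intro m _ hm
      have : (m : ℕ) ≠ i := fun hc => hm (Fin.ext hc)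
      simp [stdS, h1, h2, this]
      intro h3 h4
      exact absurd (by rw [h3]; exact h2) h4
    · simp
  · rw [Finset.sum_eq_single l]
    · simp [stdS, h1, h2]
    · intro m _ hm
      simp [stdS, h1, h2, hm]
    · simp

lemma dD_mul_apply (i : ℕ) (B : Matrix (Fin n) (Fin n) R) (k l : Fin n) :
    (dD n R i * B) k l = if (k : ℕ) = i ∨ (k : ℕ) = i + 1 then B k l else 0 := by
  rw [Matrix.mul_apply, Finset.sum_eq_single k]
  · split_ifs with h1 <;> simp [dD, h1]
  · intro m _ hm
    simp [dD, (Ne.symm hm)]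
  · simp

lemma mul_dD_apply (i : ℕ) (B : Matrix (Fin n) (Fin n) R) (k l : Fin n) :
    (B * dD n R i) k l = if (l : ℕ) = i ∨ (l : ℕ) = i + 1 then B k l else 0 := by
  rw [Matrix.mul_apply, Finset.sum_eq_single l]
  · split_ifs with h1 <;> simp [dD, h1]
  · intro m _ hm
    simp [dD, hm]
  · simp

lemma stdN_decomp (a c t : R) (i : ℕ) :
    stdN n a c t i = (1 - c) • (1 : Matrix (Fin n) (Fin n) R) + c • stdS n t i
      + (a - 1 + c) • dD n R i := by
  ext k l
  simp only [stdN, stdS, dD, Matrix.of_apply, Matrix.add_apply, Matrix.smul_apply,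
    Matrix.one_apply, smul_eq_mul, Fin.ext_iff]
  split_ifs <;> first | ring1 | omega | (exfalso; omega)

lemma braid (t : R) (i : ℕ) (h : i + 2 < n) :
    stdS n t i * stdS n t (i + 1) * stdS n t i
      = stdS n t (i + 1) * stdS n t i * stdS n t (i + 1) := by
  have h1 : i + 1 < n := by omega
  have h2 : i + 1 + 1 < n := by omega
  ext k l
  simp only [mul_assoc, stdS_mul_apply t i h1, stdS_mul_apply t (i + 1) h2]
  by_cases hk0 : (k : ℕ) = i <;> by_cases hk1 : (k : ℕ) = i + 1 <;>
    by_cases hl0 : (l : ℕ) = i <;> by_cases hl1 : (l : ℕ) = i + 1 <;>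
    by_cases hl2 : (l : ℕ) = i + 1 + 1 <;>
    simp [stdS, Fin.ext_iff, hk0, hk1, hl0, hl1, hl2] <;>
    (try split_ifs) <;> (first | rfl | ring1 | omega | (exfalso; omega) | (intros; ring1))

lemma sComm (t : R) (i j : ℕ) (hij : i + 2 ≤ j ∨ j + 2 ≤ i) (hi : i + 1 < n)
    (hj : j + 1 < n) :
    stdS n t i * stdS n t j = stdS n t j * stdS n t i := by
  ext k l
  rw [stdS_mul_apply t i hi, mul_stdS_apply t i hi]
  by_cases hk0 : (k : ℕ) = i <;> by_cases hk1 : (k : ℕ) = i + 1 <;>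
    by_cases hl0 : (l : ℕ) = i <;> by_cases hl1 : (l : ℕ) = i + 1 <;>
    simp [stdS, Fin.ext_iff, hk0, hk1, hl0, hl1] <;>
    (try split_ifs) <;> (first | rfl | ring1 | omega | (exfalso; omega) | (intros; ring1))

lemma sdComm (t : R) (i j : ℕ) (hij : i + 2 ≤ j ∨ j + 2 ≤ i ∨ i = j) :
    stdS n t i * dD n R j = dD n R j * stdS n t i := by
  ext k l
  rw [mul_dD_apply, dD_mul_apply]
  split_ifs with h1 h2 h2 <;>
    simp [stdS, Fin.ext_iff] <;>
    (try split_ifs) <;> (first | rfl | ring1 | omega | (exfalso; omega) | (intros; ring1))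

lemma ddComm (i j : ℕ) : dD n R i * dD n R j = dD n R j * dD n R i := by
  ext k l
  rw [mul_dD_apply, dD_mul_apply]
  split_ifs with h1 h2 h2 <;>
    simp [dD, Fin.ext_iff] <;>
    (try split_ifs) <;> (first | rfl | ring1 | omega | (exfalso; omega) | (intros; ring1))

lemma ssd1 (t : R) (i : ℕ) (h : i + 2 < n) :
    stdS n t i * stdS n t (i + 1) * dD n R i
      = dD n R (i + 1) * stdS n t i * stdS n t (i + 1) := by
  have h1 : i + 1 < n := by omega
  have h2 : i + 1 + 1 < n := by omega
  ext k l
  simp only [mul_dD_apply, dD_mul_apply, stdS_mul_apply t i h1,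
    stdS_mul_apply t (i + 1) h2, mul_stdS_apply t i h1, mul_stdS_apply t (i + 1) h2]
  by_cases hk0 : (k : ℕ) = i <;> by_cases hk1 : (k : ℕ) = i + 1 <;>
    by_cases hk2 : (k : ℕ) = i + 1 + 1 <;>
    by_cases hl0 : (l : ℕ) = i <;> by_cases hl1 : (l : ℕ) = i + 1 <;>
    by_cases hl2 : (l : ℕ) = i + 1 + 1 <;>
    simp [stdS, dD, Fin.ext_iff, hk0, hk1, hk2, hl0, hl1, hl2] <;>
    (try split_ifs) <;> (first | rfl | ring1 | omega | (exfalso; omega) | (intros; ring1))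

lemma ssd2 (t : R) (i : ℕ) (h : i + 2 < n) :
    stdS n t (i + 1) * stdS n t i * dD n R (i + 1)
      = dD n R i * stdS n t (i + 1) * stdS n t i := by
  have h1 : i + 1 < n := by omega
  have h2 : i + 1 + 1 < n := by omega
  ext k l
  simp only [mul_dD_apply, dD_mul_apply, stdS_mul_apply t i h1,
    stdS_mul_apply t (i + 1) h2, mul_stdS_apply t i h1, mul_stdS_apply t (i + 1) h2]
  by_cases hk0 : (k : ℕ) = i <;> by_cases hk1 : (k : ℕ) = i + 1 <;>
    by_cases hk2 : (k : ℕ) = i + 1 + 1 <;>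
    by_cases hl0 : (l : ℕ) = i <;> by_cases hl1 : (l : ℕ) = i + 1 <;>
    by_cases hl2 : (l : ℕ) = i + 1 + 1 <;>
    simp [stdS, dD, Fin.ext_iff, hk0, hk1, hk2, hl0, hl1, hl2] <;>
    (try split_ifs) <;> (first | rfl | ring1 | omega | (exfalso; omega) | (intros; ring1))

lemma nComm (a c t : R) (i j : ℕ) (hij : i + 2 ≤ j ∨ j + 2 ≤ i) (hi : i + 1 < n)
    (hj : j + 1 < n) :
    stdN n a c t i * stdN n a c t j = stdN n a c t j * stdN n a c t i := by
  have hij' : i + 2 ≤ j ∨ j + 2 ≤ i ∨ i = j := by omega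
  have hji' : j + 2 ≤ i ∨ i + 2 ≤ j ∨ j = i := by omega
  rw [stdN_decomp a c t i, stdN_decomp a c t j]
  simp only [add_mul, mul_add, smul_mul_assoc, mul_smul_comm, one_mul, mul_one]
  rw [sComm t i j hij hi hj, sdComm t i j hij', ← sdComm t j i hji', ddComm i j]
  try module

lemma nsComm (a c t : R) (i j : ℕ) (hij : i + 2 ≤ j ∨ j + 2 ≤ i) (hi : i + 1 < n)
    (hj : j + 1 < n) :
    stdN n a c t i * stdS n t j = stdS n t j * stdN n a c t i := by
  have hji' : j + 2 ≤ i ∨ i + 2 ≤ j ∨ j = i := by omega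
  rw [stdN_decomp a c t i]
  simp only [add_mul, mul_add, smul_mul_assoc, mul_smul_comm, one_mul, mul_one]
  rw [sComm t i j hij hi hj, ← sdComm t j i hji']
  try module

lemma snComm (a c t : R) (i : ℕ) :
    stdS n t i * stdN n a c t i = stdN n a c t i * stdS n t i := by
  rw [stdN_decomp a c t i]
  simp only [add_mul, mul_add, smul_mul_assoc, mul_smul_comm, one_mul, mul_one]
  rw [sdComm t i i (by omega)]
  try module

lemma mixed1 (a c t : R) (i : ℕ) (h : i + 2 < n) :
    stdS n t i * stdS n t (i + 1) * stdN n a c t i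
      = stdN n a c t (i + 1) * (stdS n t i * stdS n t (i + 1)) := by
  rw [stdN_decomp a c t i, stdN_decomp a c t (i + 1)]
  simp only [add_mul, mul_add, smul_mul_assoc, mul_smul_comm, one_mul, mul_one,
    ← mul_assoc]
  rw [braid t i h, ssd1 t i h]
  try module

lemma mixed2 (a c t : R) (i : ℕ) (h : i + 2 < n) :
    stdS n t (i + 1) * stdS n t i * stdN n a c t (i + 1)
      = stdN n a c t i * (stdS n t (i + 1) * stdS n t i) := by
  rw [stdN_decomp a c t (i + 1), stdN_decomp a c t i]
  simp only [add_mul, mul_add, smul_mul_assoc, mul_smul_comm, one_mul, mul_one,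
    ← mul_assoc]
  rw [← braid t i h, ssd2 t i h]
  try module


lemma two_sum (p q : Fin n) (hpq : p ≠ q) (f : Fin n → R)
    (hf : ∀ m, m ≠ p → m ≠ q → f m = 0) : ∑ m, f m = f p + f q := by
  rw [← Finset.add_sum_erase _ f (Finset.mem_univ p)]
  congr 1
  rw [Finset.sum_eq_single_of_mem q (Finset.mem_erase.2 ⟨hpq.symm, Finset.mem_univ q⟩)]
  intro m hm hmq
  exact hf m (Finset.mem_erase.1 hm).1 hmq

lemma stdN_mul_apply (a c t : R) (i : ℕ) (h : i + 1 < n) (B : Matrix (Fin n) (Fin n) R)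
    (k l : Fin n) :
    (stdN n a c t i * B) k l =
      if (k : ℕ) = i then a * B ⟨i, by omega⟩ l + c * t * B ⟨i + 1, h⟩ l
      else if (k : ℕ) = i + 1 then c * B ⟨i, by omega⟩ l + a * B ⟨i + 1, h⟩ l
      else B k l := by
  rw [Matrix.mul_apply]
  split_ifs with h1 h2
  · rw [two_sum ⟨i, by omega⟩ ⟨i + 1, h⟩ (by simp [Fin.ext_iff])]
    · simp [stdN, h1]
    · intro m hm1 hm2
      have e1 : (m : ℕ) ≠ i := fun hc => hm1 (Fin.ext hc)
      have e2 : (m : ℕ) ≠ i + 1 := fun hc => hm2 (Fin.ext hc)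
      simp [stdN, h1, e1, e2, Fin.ext_iff]
      try omega
  · rw [two_sum ⟨i, by omega⟩ ⟨i + 1, h⟩ (by simp [Fin.ext_iff])]
    · simp [stdN, h1, h2]
    · intro m hm1 hm2
      have e1 : (m : ℕ) ≠ i := fun hc => hm1 (Fin.ext hc)
      have e2 : (m : ℕ) ≠ i + 1 := fun hc => hm2 (Fin.ext hc)
      simp [stdN, h1, h2, e1, e2, Fin.ext_iff]
      try omega
  · rw [Finset.sum_eq_single k]
    · simp [stdN, h1, h2]
    · intro m _ hm
      have : ¬ (k = m) := fun hc => hm hc.symm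
      simp [stdN, h1, h2, this, Fin.ext_iff] at this ⊢
      omega
    · simp

lemma stdN_right_inv (a c u t : R) (hu : (a ^ 2 - t * c ^ 2) * u = 1) (i : ℕ)
    (hi : i + 1 < n) :
    stdN n a c t i * stdN n (a * u) (-(c * u)) t i = 1 := by
  ext k l
  rw [stdN_mul_apply a c t i hi]
  by_cases hk0 : (k : ℕ) = i <;> by_cases hk1 : (k : ℕ) = i + 1 <;>
    by_cases hl0 : (l : ℕ) = i <;> by_cases hl1 : (l : ℕ) = i + 1 <;>
    simp [stdN, Matrix.one_apply, Fin.ext_iff, hk0, hk1, hl0, hl1] <;>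
    (try split_ifs) <;>
    (first | rfl | ring1 | omega | (exfalso; omega) | linear_combination hu |
      linear_combination c * t * hu | linear_combination a * hu | (intros; ring1))

end SBnAux

/-- For any `a, c ∈ ℤ[t^{±1}]`, the matrices `stdS` and `stdN` satisfy all the
defining relations of the singular braid group `SB_n`; and if `a² - t·c²` is a
unit then each `stdN` is invertible.  (Indices are 0-indexed: generators are
indexed by `0 ≤ i < n - 1`.) -/
theorem standard_rep_extends_to_SBn (n : ℕ) (hn : 2 ≤ n) (a c : LaurentPolynomial ℤ) :
    (∀ i, i + 1 < n - 1 →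
      stdS n tL i * stdS n tL (i + 1) * stdS n tL i
        = stdS n tL (i + 1) * stdS n tL i * stdS n tL (i + 1)) ∧
    (∀ i j, i < n - 1 → j < n - 1 → (i + 2 ≤ j ∨ j + 2 ≤ i) →
      stdS n tL i * stdS n tL j = stdS n tL j * stdS n tL i) ∧
    (∀ i j, i < n - 1 → j < n - 1 → (i + 2 ≤ j ∨ j + 2 ≤ i) →
      stdN n a c tL i * stdN n a c tL j
        = stdN n a c tL j * stdN n a c tL i) ∧
    (∀ i j, i < n - 1 → j < n - 1 → (i + 2 ≤ j ∨ j + 2 ≤ i) →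
      stdN n a c tL i * stdS n tL j = stdS n tL j * stdN n a c tL i) ∧
    (∀ i, i < n - 1 →
      stdS n tL i * stdN n a c tL i = stdN n a c tL i * stdS n tL i) ∧
    (∀ i, i + 1 < n - 1 →
      stdS n tL i * stdS n tL (i + 1) * stdN n a c tL i
        = stdN n a c tL (i + 1) * (stdS n tL i * stdS n tL (i + 1))) ∧
    (∀ i, i + 1 < n - 1 →
      stdS n tL (i + 1) * stdS n tL i * stdN n a c tL (i + 1)
        = stdN n a c tL i * (stdS n tL (i + 1) * stdS n tL i)) ∧
    (IsUnit (a ^ 2 - tL * c ^ 2) → ∀ i, i < n - 1 → IsUnit (stdN n a c tL i)) := by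
  refine ⟨?_, ?_, ?_, ?_, ?_, ?_, ?_, ?_⟩
  · intro i hi; exact SBnAux.braid tL i (by omega)
  · intro i j hi hj hij; exact SBnAux.sComm tL i j hij (by omega) (by omega)
  · intro i j hi hj hij; exact SBnAux.nComm a c tL i j hij (by omega) (by omega)
  · intro i j hi hj hij; exact SBnAux.nsComm a c tL i j hij (by omega) (by omega)
  · intro i hi; exact SBnAux.snComm a c tL i
  · intro i hi; exact SBnAux.mixed1 a c tL i (by omega)
  · intro i hi; exact SBnAux.mixed2 a c tL i (by omega)
  · intro hu i hi
    obtain ⟨u, hu'⟩ := hu.exists_right_inv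
    have := invertibleOfRightInverse _ _
      (SBnAux.stdN_right_inv (n := n) a c u tL hu' i (by omega))
    exact isUnit_of_invertible _
end

section
/- Let n ≥ 3, let t ∈ ℂ with t ≠ 0 and t ≠ 1, and let a, c ∈ ℂ with a² − t·c² ≠ 0. For 1 ≤ i ≤ n−1, let S_i ∈ M_n(ℂ) be the matrix with (i,i+1)-entry t, (i+1,i)-entry 1, (k,k)-entry 1 for every k ∉ {i,i+1}, and all other entries 0, and let N_i ∈ M_n(ℂ) be the matrix with (i,i)- and (i+1,i+1)-entries a, (i,i+1)-entry c·t, (i+1,i)-entry c, (k,k)-entry 1 for every k ∉ {i,i+1}, and all other entries 0. Then the only ℂ-subspaces W of ℂⁿ satisfying S_i·W ⊆ W and N_i·W ⊆ W for all 1 ≤ i ≤ n−1 are {0} and ℂⁿ; that is, the extension ρ'_S of the standard representation to the singular braid group SB_n is irreducible. -/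
/-! Since `S_i² = 1 + (t - 1) E_i`, where `E_i` is the coordinate projection onto `{i, i + 1}`,
a subspace invariant under `S_i` is invariant under `E_i` when `t ≠ 1`. For `n ≥ 3`, differences
and products of the `E_i` give the projection onto each single coordinate, so a nonzero invariant
subspace contains some standard basis vector `e_j`. Finally `S_i e_i = e_{i+1}` and
`S_i e_{i+1} = t e_i` with `t ≠ 0` carry `e_j` to every `e_k`. -/

open Matrix

lemma stdS_mulVec_apply {n : ℕ} {R : Type*} [CommRing R] (t : R) {i : ℕ} (hi : i + 1 < n)
    (w : Fin n → R) (k : Fin n) :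
    (stdS n t i *ᵥ w) k =
      if (k : ℕ) = i then t * w ⟨i + 1, hi⟩
      else if (k : ℕ) = i + 1 then w ⟨i, by omega⟩ else w k := by
  have hrow : (fun l => stdS n t i k l) =
      if (k : ℕ) = i then Pi.single ⟨i + 1, hi⟩ t
      else if (k : ℕ) = i + 1 then Pi.single ⟨i, by omega⟩ 1 else Pi.single k 1 := by
    split_ifs <;> ext l <;> simp only [stdS, of_apply, Pi.single_apply, Fin.ext_iff] <;>
      split_ifs <;> first | rfl | omega
  simp only [mulVec, hrow]
  split_ifs <;> simp [single_dotProduct]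

def window (n i : ℕ) : Set (Fin n) := {k | (k : ℕ) = i ∨ (k : ℕ) = i + 1}

lemma stdS_mulVec_stdS_mulVec {n : ℕ} {R : Type*} [CommRing R] (t : R) {i : ℕ}
    (hi : i + 1 < n) (w : Fin n → R) :
    stdS n t i *ᵥ (stdS n t i *ᵥ w) = w + (t - 1) • (window n i).indicator w := by
  ext ⟨k, hk⟩
  by_cases hki : k = i
  · subst hki; simp [stdS_mulVec_apply t hi, window, sub_one_mul]
  by_cases hki' : k = i + 1
  · subst hki'; simp [stdS_mulVec_apply t hi, window, sub_one_mul]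
  · simp [stdS_mulVec_apply t hi, window, hki, hki']

lemma stdS_mulVec_single_left {n : ℕ} {R : Type*} [CommRing R] (t : R) {i : ℕ}
    (hi : i + 1 < n) (x : R) :
    stdS n t i *ᵥ Pi.single ⟨i, by omega⟩ x = Pi.single ⟨i + 1, hi⟩ x := by
  ext k
  simp only [stdS_mulVec_apply t hi, Pi.single_apply, Fin.ext_iff]
  split_ifs <;> first | omega | simp

lemma stdS_mulVec_single_right {n : ℕ} {R : Type*} [CommRing R] (t : R) {i : ℕ}
    (hi : i + 1 < n) (x : R) :
    stdS n t i *ᵥ Pi.single ⟨i + 1, hi⟩ x = Pi.single ⟨i, by omega⟩ (t * x) := by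
  ext k
  simp only [stdS_mulVec_apply t hi, Pi.single_apply, Fin.ext_iff]
  split_ifs <;> first | omega | simp

def Submodule.IndicatorStable {ι R M : Type*} [Semiring R] [AddCommMonoid M] [Module R M]
    (W : Submodule R (ι → M)) (s : Set ι) : Prop :=
  ∀ w ∈ W, s.indicator w ∈ W

namespace Submodule.IndicatorStable

variable {ι R M : Type*} [Ring R] [AddCommGroup M] [Module R M] {W : Submodule R (ι → M)}
  {s u : Set ι}

lemma inter (hs : W.IndicatorStable s) (hu : W.IndicatorStable u) :
    W.IndicatorStable (s ∩ u) := fun w hw => by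
  simpa [Set.indicator_indicator] using hs _ (hu w hw)

lemma sdiff (hs : W.IndicatorStable s) (hu : W.IndicatorStable u) :
    W.IndicatorStable (s \ u) := fun w hw => by
  rw [← Set.sdiff_inter_self_eq_sdiff, Set.indicator_sdiff Set.inter_subset_right,
    ← Set.indicator_indicator]
  exact W.sub_mem (hs w hw) (hu _ (hs w hw))

end Submodule.IndicatorStable

section Invariant

variable {n : ℕ} {K : Type*} [Field K] {t : K} {i : ℕ} {W : Submodule K (Fin n → K)}

lemma indicatorStable_window (ht1 : t ≠ 1) (hi : i + 1 < n)
    (hS : ∀ w ∈ W, stdS n t i *ᵥ w ∈ W) : W.IndicatorStable (window n i) := fun w hw => by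
  have h := W.sub_mem (hS _ (hS w hw)) hw
  rw [stdS_mulVec_stdS_mulVec t hi, add_sub_cancel_left] at h
  simpa [smul_smul, inv_mul_cancel₀ (sub_ne_zero.2 ht1)] using W.smul_mem (t - 1)⁻¹ h

lemma single_one_mem_iff_succ (ht0 : t ≠ 0) (hi : i + 1 < n)
    (hS : ∀ w ∈ W, stdS n t i *ᵥ w ∈ W) :
    Pi.single ⟨i, by omega⟩ 1 ∈ W ↔ Pi.single ⟨i + 1, hi⟩ 1 ∈ W := by
  refine ⟨fun h => ?_, fun h => ?_⟩
  · rw [← stdS_mulVec_single_left t hi]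
    exact hS _ h
  · have h' := W.smul_mem t⁻¹ (hS _ h)
    rwa [stdS_mulVec_single_right, ← Pi.single_smul', smul_eq_mul, mul_one,
      inv_mul_cancel₀ ht0] at h'

end Invariant

lemma indicatorStable_singleton {n : ℕ} (hn : 3 ≤ n) {R M : Type*} [Ring R] [AddCommGroup M]
    [Module R M] {W : Submodule R (Fin n → M)}
    (hwin : ∀ i, i + 1 < n → W.IndicatorStable (window n i)) (j : Fin n) :
    W.IndicatorStable {j} := by
  have hj := j.2
  obtain h0 | hlast | hmid : (j : ℕ) = 0 ∨ (j : ℕ) + 1 = n ∨ (0 < (j : ℕ) ∧ (j : ℕ) + 1 < n) := by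
    omega
  · convert (hwin 0 (by omega)).sdiff (hwin 1 (by omega))
    ext k; simp [window, Fin.ext_iff]; omega
  · convert (hwin (n - 2) (by omega)).sdiff (hwin (n - 3) (by omega))
    ext k; simp [window, Fin.ext_iff]; omega
  · convert (hwin (j - 1) (by omega)).inter (hwin j hmid.2)
    ext k; simp [window, Fin.ext_iff]; omega

lemma exists_single_one_mem {ι K : Type*} [DecidableEq ι] [Field K] {W : Submodule K (ι → K)}
    (hW : W ≠ ⊥) (h : ∀ j, W.IndicatorStable {j}) : ∃ j, Pi.single j 1 ∈ W := by
  obtain ⟨w, hw, hw0⟩ := W.ne_bot_iff.1 hW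
  obtain ⟨j, hj⟩ := Function.ne_iff.1 hw0
  refine ⟨j, ?_⟩
  simpa [← Pi.single_smul', inv_mul_cancel₀ hj] using W.smul_mem (w j)⁻¹ (h j w hw)

lemma eq_top_of_single_one_mem {ι R : Type*} [Fintype ι] [DecidableEq ι] [Semiring R]
    {W : Submodule R (ι → R)} (h : ∀ j, Pi.single j 1 ∈ W) : W = ⊤ :=
  eq_top_iff.2 <| (Pi.basisFun R ι).span_eq ▸
    Submodule.span_le.2 (Set.range_subset_iff.2 fun j => by simpa using h j)

lemma Fin.forall_of_iff_succ {n : ℕ} {P : Fin n → Prop}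
    (h : ∀ i (hi : i + 1 < n), P ⟨i, by omega⟩ ↔ P ⟨i + 1, hi⟩) {j : Fin n} (hj : P j)
    (k : Fin n) : P k := by
  have key : ∀ m (hm : m < n), P ⟨m, hm⟩ ↔ P ⟨0, by omega⟩ := by
    intro m
    induction m with
    | zero => simp
    | succ m ih => intro hm; rw [← h m hm, ih]
  exact (key k k.2).2 ((key j j.2).1 hj)

theorem irreducible_extension_of_t_ne_one_general (n : ℕ) (hn : 3 ≤ n)
    (t : ℂ) (ht0 : t ≠ 0) (ht1 : t ≠ 1)
    (W : Submodule ℂ (Fin n → ℂ))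
    (hS : ∀ i, i < n - 1 → ∀ w ∈ W, (stdS n t i).mulVec w ∈ W) :
    W = ⊥ ∨ W = ⊤ := by
  refine or_iff_not_imp_left.2 fun hW => eq_top_of_single_one_mem fun k => ?_
  have hwin (i : ℕ) (hi : i + 1 < n) : W.IndicatorStable (window n i) :=
    indicatorStable_window ht1 hi (hS i (by omega))
  obtain ⟨j, hj⟩ := exists_single_one_mem hW (indicatorStable_singleton hn hwin)
  exact Fin.forall_of_iff_succ (P := fun k => Pi.single k 1 ∈ W)
    (fun i hi => single_one_mem_iff_succ ht0 hi (hS i (by omega))) hj k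

/-- For `t ≠ 0, 1`, every extension of the standard representation of `B_n` to the
singular braid group `SB_n` (`n ≥ 3`) is irreducible: the only invariant subspaces
of `ℂⁿ` are `⊥` and `⊤`.  (0-indexed generators `0 ≤ i < n - 1`.) -/
theorem irreducible_extension_of_t_ne_one (n : ℕ) (hn : 3 ≤ n)
    (t : ℂ) (ht0 : t ≠ 0) (ht1 : t ≠ 1) (a c : ℂ) (hac : a ^ 2 - t * c ^ 2 ≠ 0)
    (W : Submodule ℂ (Fin n → ℂ))
    (hS : ∀ i, i < n - 1 → ∀ w ∈ W, (stdS n t i).mulVec w ∈ W)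
    (hN : ∀ i, i < n - 1 → ∀ w ∈ W, (stdN n a c t i).mulVec w ∈ W) :
    W = ⊥ ∨ W = ⊤ :=
  irreducible_extension_of_t_ne_one_general n hn t ht0 ht1 W hS
end

section
/- Let n ≥ 2 and let a, c ∈ ℂ with a + c = 1. For 1 ≤ i ≤ n−1, let P_i ∈ M_n(ℂ) be the matrix with (i,i+1)-entry 1, (i+1,i)-entry 1, (k,k)-entry 1 for every k ∉ {i,i+1}, and all other entries 0, and let N_i ∈ M_n(ℂ) be the matrix with (i,i)- and (i+1,i+1)-entries a, (i,i+1)- and (i+1,i)-entries c, (k,k)-entry 1 for every k ∉ {i,i+1}, and all other entries 0. Then the all-ones vector u = (1, 1, …, 1) ∈ ℂⁿ satisfies P_i·u = u and N_i·u = u for all 1 ≤ i ≤ n−1; consequently the one-dimensional span of u is a nonzero proper subspace of ℂⁿ invariant under all the matrices P_i and N_i, so this extension ρ'_S of the standard representation to SB_n at t = 1 is reducible. -/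
open Matrix

/-!
At `t = 1` the matrix `P_i` is the permutation matrix of the transposition `(i i+1)`, and
`N_i = a • 1 + c • P_i`. Both therefore fix the all-ones vector once `a + c = 1`, and its
span is a line, which is a proper subspace as soon as `n ≥ 2`.
-/

theorem stdS_one_eq_permMatrix {n : ℕ} {R : Type*} [CommRing R] {i : ℕ} (hi : i + 1 < n) :
    stdS n (1 : R) i =
      (Equiv.swap ⟨i, by omega⟩ ⟨i + 1, hi⟩ : Equiv.Perm (Fin n)).permMatrix R := by
  ext k l
  simp only [stdS, of_apply, PEquiv.toMatrix_apply, Equiv.toPEquiv_apply, Option.mem_def,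
    Option.some.injEq, Equiv.swap_apply_def]
  split_ifs <;> simp only [Fin.ext_iff] at * <;> omega

theorem stdN_one_eq_smul_one_add_smul_stdS {n : ℕ} {R : Type*} [CommRing R] {a c : R}
    (hac : a + c = 1) (i : ℕ) :
    stdN n a c 1 i = a • 1 + c • stdS n 1 i := by
  ext k l
  simp only [stdN, stdS, of_apply, Matrix.add_apply, Matrix.smul_apply, one_apply, Fin.ext_iff,
    smul_eq_mul]
  split_ifs <;> first | omega | simp_all

theorem stdS_one_mulVec_one {n : ℕ} {R : Type*} [CommRing R] {i : ℕ} (hi : i + 1 < n) :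
    stdS n (1 : R) i *ᵥ 1 = 1 := by
  rw [stdS_one_eq_permMatrix hi, permMatrix_mulVec]
  rfl

theorem stdN_one_mulVec_one {n : ℕ} {R : Type*} [CommRing R] {a c : R} (hac : a + c = 1)
    {i : ℕ} (hi : i + 1 < n) :
    stdN n a c 1 i *ᵥ 1 = 1 := by
  rw [stdN_one_eq_smul_one_add_smul_stdS hac, add_mulVec, smul_mulVec, smul_mulVec,
    one_mulVec, stdS_one_mulVec_one hi, ← add_smul, hac, one_smul]

theorem mulVec_mem_span_singleton_of_mulVec_eq_self {m R : Type*} [Fintype m] [CommSemiring R]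
    {A : Matrix m m R} {v w : m → R} (hA : A *ᵥ v = v) (hw : w ∈ R ∙ v) : A *ᵥ w ∈ R ∙ v := by
  obtain ⟨r, rfl⟩ := Submodule.mem_span_singleton.1 hw
  rw [mulVec_smul, hA]
  exact Submodule.smul_mem _ r (Submodule.mem_span_singleton_self v)

theorem span_singleton_ne_top_of_one_lt_finrank {K V : Type*} [DivisionRing K] [AddCommGroup V]
    [Module K V] (h : 1 < Module.finrank K V) (v : V) : K ∙ v ≠ ⊤ := by
  intro hv
  have hle := finrank_span_le_card (R := K) ({v} : Set V)
  rw [hv, finrank_top, Set.toFinset_singleton, Finset.card_singleton] at hle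
  omega

/-- If `a + c = 1`, the all-ones vector is fixed by all images of the generators of
`SB_n` under the extension of the standard representation at `t = 1`, so its span is
a nonzero proper invariant subspace:  the representation is reducible.
(0-indexed generators `0 ≤ i < n - 1`.) -/
theorem reducible_extension_of_add_eq_one (n : ℕ) (hn : 2 ≤ n)
    (a c : ℂ) (hac : a + c = 1) :
    (∀ i, i < n - 1 →
      (stdS n (1 : ℂ) i).mulVec (fun _ => 1) = (fun _ => 1) ∧
      (stdN n a c (1 : ℂ) i).mulVec (fun _ => 1) = (fun _ => 1)) ∧
    Submodule.span ℂ {(fun _ => 1 : Fin n → ℂ)} ≠ ⊥ ∧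
    Submodule.span ℂ {(fun _ => 1 : Fin n → ℂ)} ≠ ⊤ ∧
    (∀ i, i < n - 1 → ∀ w ∈ Submodule.span ℂ {(fun _ => 1 : Fin n → ℂ)},
      (stdS n (1 : ℂ) i).mulVec w ∈ Submodule.span ℂ {(fun _ => 1 : Fin n → ℂ)} ∧
      (stdN n a c (1 : ℂ) i).mulVec w ∈ Submodule.span ℂ {(fun _ => 1 : Fin n → ℂ)}) := by
  have hfix : ∀ i, i < n - 1 → stdS n (1 : ℂ) i *ᵥ 1 = 1 ∧ stdN n a c 1 i *ᵥ 1 = 1 :=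
    fun i hi => ⟨stdS_one_mulVec_one (by omega), stdN_one_mulVec_one hac (by omega)⟩
  have hrank : 1 < Module.finrank ℂ (Fin n → ℂ) := by
    rw [Module.finrank_fin_fun]
    omega
  have : NeZero n := ⟨by omega⟩
  refine ⟨hfix, ?_, span_singleton_ne_top_of_one_lt_finrank hrank _, fun i hi w hw =>
    ⟨mulVec_mem_span_singleton_of_mulVec_eq_self (hfix i hi).1 hw,
      mulVec_mem_span_singleton_of_mulVec_eq_self (hfix i hi).2 hw⟩⟩
  rw [Ne, Submodule.span_singleton_eq_bot]
  exact one_ne_zero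
end

section
/- Let n ≥ 3 and let a, c ∈ ℂ with a² − c² ≠ 0 and a + c ≠ 1. For 1 ≤ i ≤ n−1, let P_i ∈ M_n(ℂ) be the matrix with (i,i+1)-entry 1, (i+1,i)-entry 1, (k,k)-entry 1 for every k ∉ {i,i+1}, and all other entries 0, and let N_i ∈ M_n(ℂ) be the matrix with (i,i)- and (i+1,i+1)-entries a, (i,i+1)- and (i+1,i)-entries c, (k,k)-entry 1 for every k ∉ {i,i+1}, and all other entries 0. Then the only ℂ-subspaces W of ℂⁿ satisfying P_i·W ⊆ W and N_i·W ⊆ W for all 1 ≤ i ≤ n−1 are {0} and ℂⁿ; that is, the extension ρ'_S of the standard representation to SB_n at t = 1 is irreducible when a + c ≠ 1. -/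
/-
At `t = 1` the matrix `P_i` permutes coordinates by the transposition `(i, i+1)`, so an invariant
subspace `W` is stable under the whole symmetric group. The identity
`(1 + P_i)(N_i - 1) w = (a + c - 1)(w_i + w_{i+1}) (e_i + e_{i+1})` puts `e_i + e_{i+1}` in `W`
as soon as some `w ∈ W` has `w_i + w_{i+1} ≠ 0`, and by symmetry any two coordinates `p ≠ q`
with `w_p + w_q ≠ 0` will do; a nonzero `w` always has such a pair when `n ≥ 3`. Permuting
again, `W` contains every `e_p + e_q`, hence every
`e_p = ((e_p + e_q) + (e_p + e_r) - (e_q + e_r)) / 2`.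
-/

open Matrix

open Equiv Function

theorem Equiv.Perm.exists_apply_eq_apply_eq {ι : Type*} [DecidableEq ι] {x₀ y₀ x y : ι}
    (h₀ : x₀ ≠ y₀) (h : x ≠ y) : ∃ σ : Perm ι, σ x₀ = x ∧ σ y₀ = y := by
  refine ⟨swap x₀ x * swap y₀ (swap x₀ x y), ?_, by simp⟩
  have hx₀ : x₀ ≠ swap x₀ x y := fun e =>
    h (by rw [← swap_apply_self x₀ x y, ← e, swap_apply_left])
  simp [swap_apply_of_ne_of_ne h₀ hx₀]

theorem eq_zero_of_forall_add_eq_zero {ι K : Type*} [Field K] (h2 : (2 : K) ≠ 0) {x y z : ι}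
    (hxy : x ≠ y) (hxz : x ≠ z) (hyz : y ≠ z) (w : ι → K)
    (hw : ∀ p q, p ≠ q → w p + w q = 0) : w = 0 := by
  have hx : w x = 0 := by
    have : 2 * w x = 0 := by linear_combination hw x y hxy + hw x z hxz - hw y z hyz
    simpa [h2] using this
  funext p
  rcases eq_or_ne p x with rfl | hp
  · exact hx
  · simpa [hx] using hw p x hp

theorem comp_perm_mem_of_comp_swap_castSucc_succ_mem {m : ℕ} {α : Type*}
    {S : Set (Fin (m + 1) → α)} (hS : ∀ i : Fin m, ∀ w ∈ S, w ∘ swap i.castSucc i.succ ∈ S)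
    (σ : Perm (Fin (m + 1))) : ∀ w ∈ S, w ∘ σ ∈ S := by
  have hσ : σ ∈ Submonoid.closure (Set.range fun i : Fin m ↦ swap i.castSucc i.succ) := by
    simp [Perm.mclosure_swap_castSucc_succ]
  induction hσ using Submonoid.closure_induction with
  | mem _ h => obtain ⟨i, rfl⟩ := h; exact hS i
  | one => exact fun w hw => hw
  | mul σ τ _ _ hσ hτ => exact fun w hw => hτ _ (hσ w hw)

namespace Submodule

variable {K ι : Type*} [Field K] [DecidableEq ι] {W : Submodule K (ι → K)}

theorem single_add_single_mem_of_comp_perm_mem (hW : ∀ σ : Perm ι, ∀ w ∈ W, w ∘ σ ∈ W)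
    {x₀ y₀ x y : ι} (h₀ : x₀ ≠ y₀) (h : x ≠ y)
    (hmem : Pi.single x₀ 1 + Pi.single y₀ 1 ∈ W) : Pi.single x 1 + Pi.single y 1 ∈ W := by
  obtain ⟨σ, hσx, hσy⟩ := Perm.exists_apply_eq_apply_eq h h₀
  have := hW σ _ hmem
  rwa [Pi.add_comp, Pi.single_comp_equiv, Pi.single_comp_equiv, ← hσx, ← hσy,
    symm_apply_apply, symm_apply_apply] at this

theorem single_mem_of_comp_perm_mem (hW : ∀ σ : Perm ι, ∀ w ∈ W, w ∘ σ ∈ W)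
    (h2 : (2 : K) ≠ 0) {x₀ y₀ x y z : ι} (h₀ : x₀ ≠ y₀) (hxy : x ≠ y) (hxz : x ≠ z) (hyz : y ≠ z)
    (hmem : Pi.single x₀ 1 + Pi.single y₀ 1 ∈ W) : Pi.single x 1 ∈ W := by
  have hpair {p q : ι} (hpq : p ≠ q) := single_add_single_mem_of_comp_perm_mem hW h₀ hpq hmem
  have h2x : (2 : K) • Pi.single x 1 ∈ W := by
    convert W.sub_mem (W.add_mem (hpair hxy) (hpair hxz)) (hpair hyz) using 1
    funext k
    simp only [Pi.smul_apply, Pi.add_apply, Pi.sub_apply, smul_eq_mul]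
    ring
  exact (W.smul_mem_iff h2).1 h2x

theorem eq_top_of_single_mem [Finite ι] (hW : ∀ σ : Perm ι, ∀ w ∈ W, w ∘ σ ∈ W) {x : ι}
    (hx : Pi.single x 1 ∈ W) : W = ⊤ := by
  rw [eq_top_iff, ← (Pi.basisFun K ι).span_eq, span_le]
  rintro _ ⟨k, rfl⟩
  simpa [Pi.single_comp_equiv] using hW (swap x k) _ hx

theorem eq_bot_or_eq_top_of_comp_perm_mem [Fintype ι] (h2 : (2 : K) ≠ 0)
    (hι : 2 < Fintype.card ι) (hW : ∀ σ : Perm ι, ∀ w ∈ W, w ∘ σ ∈ W) {x₀ y₀ : ι}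
    (h₀ : x₀ ≠ y₀) (hpair : ∀ w ∈ W, (w x₀ + w y₀) • (Pi.single x₀ 1 + Pi.single y₀ 1) ∈ W) :
    W = ⊥ ∨ W = ⊤ := by
  obtain ⟨x, y, z, hxy, hxz, hyz⟩ := Fintype.two_lt_card_iff.1 hι
  refine or_iff_not_imp_left.2 fun hbot => ?_
  obtain ⟨w, hw, hw0⟩ := W.ne_bot_iff.1 hbot
  obtain ⟨p, q, hpq, hsum⟩ : ∃ p q, p ≠ q ∧ w p + w q ≠ 0 := by
    by_contra! h
    exact hw0 (eq_zero_of_forall_add_eq_zero h2 hxy hxz hyz w h)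
  obtain ⟨σ, hσp, hσq⟩ := Perm.exists_apply_eq_apply_eq h₀ hpq
  have hmem := hpair _ (hW σ w hw)
  simp only [Function.comp_apply, hσp, hσq] at hmem
  exact eq_top_of_single_mem hW
    (single_mem_of_comp_perm_mem hW h2 h₀ hxy hxz hyz ((W.smul_mem_iff hsum).1 hmem))

end Submodule

theorem stdS_one_mulVec {R : Type*} [CommRing R] {m : ℕ} (i : Fin m) (w : Fin (m + 1) → R) :
    stdS (m + 1) (1 : R) i *ᵥ w = w ∘ swap i.castSucc i.succ := by
  rw [← PEquiv.toMatrix_toPEquiv_mulVec]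
  congr 1
  ext k l
  simp only [stdS, of_apply, PEquiv.toMatrix_apply, toPEquiv_apply, Option.mem_def,
    Option.some.injEq, swap_apply_def, Fin.ext_iff, Fin.val_castSucc, Fin.val_succ]
  split_ifs <;> simp_all

theorem stdN_one_row {R : Type*} [CommRing R] {m : ℕ} (a c : R) (i : Fin m) (k : Fin (m + 1)) :
    (fun l => stdN (m + 1) a c (1 : R) i k l) =
      if k = i.castSucc then Pi.single i.castSucc a + Pi.single i.succ c
      else if k = i.succ then Pi.single i.castSucc c + Pi.single i.succ a
      else Pi.single k 1 := by
  funext l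
  simp only [stdN, of_apply, mul_one, Fin.ext_iff, Fin.val_castSucc, Fin.val_succ]
  split_ifs <;> simp_all [Pi.single_apply, Fin.ext_iff]

theorem stdN_one_mulVec {R : Type*} [CommRing R] {m : ℕ} (a c : R) (i : Fin m)
    (w : Fin (m + 1) → R) :
    stdN (m + 1) a c (1 : R) i *ᵥ w =
      update (update w i.castSucc (a * w i.castSucc + c * w i.succ)) i.succ
        (c * w i.castSucc + a * w i.succ) := by
  funext k
  change (fun l => stdN (m + 1) a c (1 : R) i k l) ⬝ᵥ w = _
  rw [stdN_one_row]
  have hne : i.succ ≠ i.castSucc := Fin.castSucc_lt_succ.ne'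
  split_ifs with h₁ h₂
  · simp [h₁, hne.symm, add_dotProduct, single_dotProduct]
  · simp [h₂, add_dotProduct, single_dotProduct]
  · simp [h₁, h₂, single_dotProduct]

theorem one_add_stdS_mul_stdN_sub_one_mulVec {R : Type*} [CommRing R] {m : ℕ} (a c : R)
    (i : Fin m) (w : Fin (m + 1) → R) :
    ((1 + stdS (m + 1) (1 : R) i) * (stdN (m + 1) a c (1 : R) i - 1)) *ᵥ w =
      ((a + c - 1) * (w i.castSucc + w i.succ)) •
        (Pi.single i.castSucc 1 + Pi.single i.succ 1) := by
  rw [← mulVec_mulVec, add_mulVec, one_mulVec, sub_mulVec, one_mulVec, stdS_one_mulVec,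
    stdN_one_mulVec]
  have hne : i.succ ≠ i.castSucc := Fin.castSucc_lt_succ.ne'
  funext k
  simp only [Pi.add_apply, Pi.sub_apply, Pi.smul_apply, smul_eq_mul, Function.comp_apply]
  rcases eq_or_ne k i.castSucc with rfl | h₁
  · simp [hne.symm]; ring
  rcases eq_or_ne k i.succ with rfl | h₂
  · simp [hne, hne.symm]; ring
  · simp [swap_apply_of_ne_of_ne h₁ h₂, h₁, h₂]

theorem irreducible_extension_at_one_of_add_ne_one_general (n : ℕ) (hn : 3 ≤ n)
    (a c : ℂ) (hac1 : a + c ≠ 1)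
    (W : Submodule ℂ (Fin n → ℂ))
    (hP : ∀ i, i < n - 1 → ∀ w ∈ W, (stdS n (1 : ℂ) i).mulVec w ∈ W)
    (hN : ∀ i, i < n - 1 → ∀ w ∈ W, (stdN n a c (1 : ℂ) i).mulVec w ∈ W) :
    W = ⊥ ∨ W = ⊤ := by
  obtain ⟨m, rfl⟩ : ∃ m, n = m + 1 := ⟨n - 1, by omega⟩
  have hperm : ∀ σ : Perm (Fin (m + 1)), ∀ w ∈ W, w ∘ σ ∈ W :=
    comp_perm_mem_of_comp_swap_castSucc_succ_mem (S := (W : Set (Fin (m + 1) → ℂ)))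
      fun i w hw => by simpa only [stdS_one_mulVec, SetLike.mem_coe] using hP i (by omega) w hw
  let i₀ : Fin m := ⟨0, by omega⟩
  refine W.eq_bot_or_eq_top_of_comp_perm_mem two_ne_zero (by rw [Fintype.card_fin]; omega) hperm
    (Fin.castSucc_lt_succ (i := i₀)).ne fun w hw => ?_
  have hmix : ((1 + stdS (m + 1) 1 i₀) * (stdN (m + 1) a c 1 i₀ - 1)) *ᵥ w ∈ W := by
    rw [← mulVec_mulVec, add_mulVec, one_mulVec, sub_mulVec, one_mulVec]
    have hNw := W.sub_mem (hN i₀ (by omega) w hw) hw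
    exact W.add_mem hNw (hP i₀ (by omega) _ hNw)
  rw [one_add_stdS_mul_stdN_sub_one_mulVec, mul_smul] at hmix
  exact (W.smul_mem_iff (sub_ne_zero.2 hac1)).1 hmix

/-- For `t = 1` and `a + c ≠ 1`, every extension of the standard representation of
`B_n` to the singular braid group `SB_n` (`n ≥ 3`) is irreducible: the only invariant
subspaces of `ℂⁿ` are `⊥` and `⊤`.  (0-indexed generators `0 ≤ i < n - 1`.) -/
theorem irreducible_extension_at_one_of_add_ne_one (n : ℕ) (hn : 3 ≤ n)
    (a c : ℂ) (hac : a ^ 2 - c ^ 2 ≠ 0) (hac1 : a + c ≠ 1)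
    (W : Submodule ℂ (Fin n → ℂ))
    (hP : ∀ i, i < n - 1 → ∀ w ∈ W, (stdS n (1 : ℂ) i).mulVec w ∈ W)
    (hN : ∀ i, i < n - 1 → ∀ w ∈ W, (stdN n a c (1 : ℂ) i).mulVec w ∈ W) :
    W = ⊥ ∨ W = ⊤ :=
  irreducible_extension_at_one_of_add_ne_one_general n hn a c hac1 W hP hN
end

section
/- Let n ≥ 3 and let SB_n be the singular braid group, i.e., the group presented by generators σ_1, …, σ_{n−1}, τ_1, …, τ_{n−1} with relations σ_iσ_{i+1}σ_i = σ_{i+1}σ_iσ_{i+1} (1 ≤ i ≤ n−2), σ_iσ_j = σ_jσ_i, τ_iτ_j = τ_jτ_i, τ_iσ_j = σ_jτ_i (|i−j| ≥ 2), τ_iσ_i = σ_iτ_i (1 ≤ i ≤ n−1), σ_iσ_{i+1}τ_i = τ_{i+1}σ_iσ_{i+1} and σ_{i+1}σ_iτ_{i+1} = τ_iσ_{i+1}σ_i (1 ≤ i ≤ n−2). Let R = ℤ[t^{±1}] with t the Laurent variable, and for 1 ≤ i ≤ n−1 let S_i ∈ GL_n(R) be the matrix with (i,i+1)-entry t, (i+1,i)-entry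 1, (k,k)-entry 1 for every k ∉ {i,i+1}, and all other entries 0. Then every group homomorphism φ : SB_n → GL_n(R) with φ(σ_i) = S_i for all 1 ≤ i ≤ n−1 is not injective. -/
open Matrix LaurentPolynomial

/-- The free-group generator corresponding to the braid generator `σ_i`
(0-indexed, `i : Fin (n-1)`). -/
def sbσ (n : ℕ) (i : Fin (n - 1)) : FreeGroup (Fin (n - 1) ⊕ Fin (n - 1)) :=
  FreeGroup.of (Sum.inl i)

/-- The free-group generator corresponding to the singular generator `τ_i`
(0-indexed, `i : Fin (n-1)`). -/
def sbτ (n : ℕ) (i : Fin (n - 1)) : FreeGroup (Fin (n - 1) ⊕ Fin (n - 1)) :=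
  FreeGroup.of (Sum.inr i)

/-- The defining relators of the singular braid group `SB_n`:
`σᵢσⱼσᵢ = σⱼσᵢσⱼ` for `j = i+1`; `σᵢσⱼ = σⱼσᵢ`, `τᵢτⱼ = τⱼτᵢ`, `τᵢσⱼ = σⱼτᵢ`
for `|i-j| ≥ 2`; `τᵢσᵢ = σᵢτᵢ`; and `σᵢσⱼτᵢ = τⱼσᵢσⱼ`, `σⱼσᵢτⱼ = τᵢσⱼσᵢ`
for `j = i+1`. -/
def sbRels (n : ℕ) : Set (FreeGroup (Fin (n - 1) ⊕ Fin (n - 1))) :=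
  {r | (∃ i j : Fin (n - 1), (i : ℕ) + 1 = (j : ℕ) ∧
          r = sbσ n i * sbσ n j * sbσ n i * (sbσ n j * sbσ n i * sbσ n j)⁻¹)
     ∨ (∃ i j : Fin (n - 1), ((i : ℕ) + 2 ≤ (j : ℕ) ∨ (j : ℕ) + 2 ≤ (i : ℕ)) ∧
          r = sbσ n i * sbσ n j * (sbσ n j * sbσ n i)⁻¹)
     ∨ (∃ i j : Fin (n - 1), ((i : ℕ) + 2 ≤ (j : ℕ) ∨ (j : ℕ) + 2 ≤ (i : ℕ)) ∧
          r = sbτ n i * sbτ n j * (sbτ n j * sbτ n i)⁻¹)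
     ∨ (∃ i j : Fin (n - 1), ((i : ℕ) + 2 ≤ (j : ℕ) ∨ (j : ℕ) + 2 ≤ (i : ℕ)) ∧
          r = sbτ n i * sbσ n j * (sbσ n j * sbτ n i)⁻¹)
     ∨ (∃ i : Fin (n - 1), r = sbτ n i * sbσ n i * (sbσ n i * sbτ n i)⁻¹)
     ∨ (∃ i j : Fin (n - 1), (i : ℕ) + 1 = (j : ℕ) ∧
          r = sbσ n i * sbσ n j * sbτ n i * (sbτ n j * sbσ n i * sbσ n j)⁻¹)
     ∨ (∃ i j : Fin (n - 1), (i : ℕ) + 1 = (j : ℕ) ∧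
          r = sbσ n j * sbσ n i * sbτ n j * (sbτ n i * sbσ n j * sbσ n i)⁻¹)}

/-- The singular braid group `SB_n`, presented by generators `σ_i, τ_i`
(`i : Fin (n-1)`, 0-indexed) and the relations `sbRels n`. -/
def SingularBraidGroup (n : ℕ) := PresentedGroup (sbRels n)

instance (n : ℕ) : Group (SingularBraidGroup n) :=
  inferInstanceAs (Group (PresentedGroup (sbRels n)))

/-!
Each `S_i²` is diagonal, so `φ` identifies `σ₁²σ₂²` with `σ₂²σ₁²`. These differ in `SB_n`:
identifying `τ_i` with `σ_i` and sending `σ_i` to the unreduced Burau matrix `1 - x_i` at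
`t = -1` (where `x_i² = 0`) gives a representation over `ℤ` in which their images are
`(1 - 2x₁)(1 - 2x₂)` and `(1 - 2x₂)(1 - 2x₁)`, whose difference `4 (x₁x₂ - x₂x₁)` is nonzero.
-/

section OneSub

variable {R : Type*} [Ring R] {x y : R}

lemma one_sub_braid_of_mul_self_eq_zero (hx : x * x = 0) (hy : y * y = 0)
    (hxyx : x * y * x = -x) (hyxy : y * x * y = -y) :
    (1 - x) * (1 - y) * (1 - x) = (1 - y) * (1 - x) * (1 - y) := by
  have expand : ∀ a b : R, (1 - a) * (1 - b) * (1 - a) =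
      1 - 2 * a - b + a * b + b * a + a * a - a * b * a := fun a b => by noncomm_ring
  rw [expand, expand, hx, hy, hxyx, hyxy]
  noncomm_ring

lemma one_sub_sq_of_mul_self_eq_zero (hx : x * x = 0) : (1 - x) ^ 2 = 1 - 2 • x :=
  calc (1 - x) ^ 2 = 1 - 2 • x + x * x := by noncomm_ring
    _ = 1 - 2 • x := by rw [hx, add_zero]

lemma nsmul_mul_eq_of_commute_one_sub_sq (hx : x * x = 0) (hy : y * y = 0)
    (h : Commute ((1 - x) ^ 2) ((1 - y) ^ 2)) : 4 • (x * y) = 4 • (y * x) := by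
  rw [one_sub_sq_of_mul_self_eq_zero hx, one_sub_sq_of_mul_self_eq_zero hy] at h
  have h2 : Commute (2 • x) (2 • y) := by
    simpa only [sub_sub_cancel] using
      (Commute.one_right _).sub_right ((Commute.one_left _).sub_left h)
  simpa only [smul_mul_smul] using h2.eq

end OneSub

namespace Matrix

variable {ι R : Type*} [Fintype ι] [CommRing R]

lemma vecMulVec_mul_vecMulVec_eq_smul (u v w x : ι → R) :
    vecMulVec u v * vecMulVec w x = (v ⬝ᵥ w) • vecMulVec u x := by
  rw [vecMulVec_mul_vecMulVec, vecMulVec_smul]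

variable [DecidableEq ι]

/-- `1 - burauNil p q` is the unreduced Burau matrix at `t = -1` on the coordinates `p, q`:
the block `!![2, -1; 1, 0]` there and the identity elsewhere. -/
def burauNil (p q : ι) : Matrix ι ι R :=
  vecMulVec (Pi.single p 1 + Pi.single q 1) (Pi.single q 1 - Pi.single p 1)

lemma burauNil_mul_self (p q : ι) : (burauNil p q * burauNil p q : Matrix ι ι R) = 0 := by
  simp [burauNil, vecMulVec_mul_vecMulVec_eq_smul, Pi.single_apply, eq_comm]

variable {p q s : ι}

lemma burauNil_mul_burauNil_of_disjoint {p' q' : ι} (h1 : p ≠ p') (h2 : p ≠ q') (h3 : q ≠ p')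
    (h4 : q ≠ q') : (burauNil p q * burauNil p' q' : Matrix ι ι R) = 0 := by
  simp [burauNil, vecMulVec_mul_vecMulVec_eq_smul, h1, h2, h3, h4]

lemma burauNil_mul_burauNil_of_adjacent (hpq : p ≠ q) (hps : p ≠ s) (hqs : q ≠ s) :
    (burauNil p q * burauNil q s : Matrix ι ι R) =
      vecMulVec (Pi.single p 1 + Pi.single q 1) (Pi.single s 1 - Pi.single q 1) := by
  simp [burauNil, vecMulVec_mul_vecMulVec_eq_smul, hpq, hps, hqs]

lemma burauNil_mul_burauNil_of_adjacent' (hpq : p ≠ q) (hps : p ≠ s) (hqs : q ≠ s) :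
    (burauNil q s * burauNil p q : Matrix ι ι R) =
      -vecMulVec (Pi.single q 1 + Pi.single s 1) (Pi.single q 1 - Pi.single p 1) := by
  simp [burauNil, vecMulVec_mul_vecMulVec_eq_smul, hpq, hps, hqs]

lemma burauNil_mul_burauNil_mul_burauNil_left (hpq : p ≠ q) (hps : p ≠ s) (hqs : q ≠ s) :
    (burauNil p q * burauNil q s * burauNil p q : Matrix ι ι R) = -burauNil p q := by
  rw [burauNil_mul_burauNil_of_adjacent hpq hps hqs, burauNil, vecMulVec_mul_vecMulVec_eq_smul]
  simp [hpq, hps, hqs]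

lemma burauNil_mul_burauNil_mul_burauNil_right (hpq : p ≠ q) (hps : p ≠ s) (hqs : q ≠ s) :
    (burauNil q s * burauNil p q * burauNil q s : Matrix ι ι R) = -burauNil q s := by
  rw [burauNil_mul_burauNil_of_adjacent' hpq hps hqs, burauNil, neg_mul,
    vecMulVec_mul_vecMulVec_eq_smul]
  simp [hpq.symm, hps.symm, hqs.symm]

lemma nsmul_burauNil_mul_burauNil_ne [CharZero R] (hpq : p ≠ q) (hps : p ≠ s) (hqs : q ≠ s) :
    4 • (burauNil p q * burauNil q s : Matrix ι ι R) ≠ 4 • (burauNil q s * burauNil p q) := by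
  intro h
  have hpq_entry := congr_fun (congr_fun h p) q
  rw [burauNil_mul_burauNil_of_adjacent hpq hps hqs,
    burauNil_mul_burauNil_of_adjacent' hpq hps hqs] at hpq_entry
  simp [vecMulVec_apply, hpq, hps, hqs, hpq.symm] at hpq_entry

noncomputable def burauUnit (p q : ι) : GL ι R :=
  (IsNilpotent.isUnit_one_sub ⟨2, by rw [sq, burauNil_mul_self (R := R) p q]⟩).unit

lemma coe_burauUnit (p q : ι) : ((burauUnit p q : GL ι R) : Matrix ι ι R) = 1 - burauNil p q :=
  IsUnit.unit_spec _

lemma burauUnit_braid (hpq : p ≠ q) (hps : p ≠ s) (hqs : q ≠ s) :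
    (burauUnit p q * burauUnit q s * burauUnit p q : GL ι R) =
      burauUnit q s * burauUnit p q * burauUnit q s := by
  ext : 1
  simpa only [Units.val_mul, coe_burauUnit] using
    one_sub_braid_of_mul_self_eq_zero (burauNil_mul_self p q) (burauNil_mul_self q s)
      (burauNil_mul_burauNil_mul_burauNil_left hpq hps hqs)
      (burauNil_mul_burauNil_mul_burauNil_right hpq hps hqs)

lemma commute_burauUnit {p' q' : ι} (h1 : p ≠ p') (h2 : p ≠ q') (h3 : q ≠ p') (h4 : q ≠ q') :
    Commute (burauUnit p q : GL ι R) (burauUnit p' q') := by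
  have h : Commute (burauNil p q : Matrix ι ι R) (burauNil p' q') :=
    (burauNil_mul_burauNil_of_disjoint h1 h2 h3 h4).trans
      (burauNil_mul_burauNil_of_disjoint h1.symm h3.symm h2.symm h4.symm).symm
  rw [← Commute.units_val_iff, coe_burauUnit, coe_burauUnit]
  exact (Commute.one_right _).sub_right ((Commute.one_left _).sub_left h)

end Matrix

namespace SingularBraidGroup

variable {n : ℕ}

abbrev σ (i : Fin (n - 1)) : SingularBraidGroup n := PresentedGroup.of (Sum.inl i)

def liftBraid {G : Type*} [Group G] (a : Fin (n - 1) → G)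
    (braid : ∀ i j : Fin (n - 1), (i : ℕ) + 1 = j → a i * a j * a i = a j * a i * a j)
    (comm : ∀ i j : Fin (n - 1), (i : ℕ) + 2 ≤ j → Commute (a i) (a j)) :
    SingularBraidGroup n →* G :=
  PresentedGroup.toGroup (f := Sum.elim a a) <| by
    rintro r (⟨i, j, hij, rfl⟩ | ⟨i, j, hij, rfl⟩ | ⟨i, j, hij, rfl⟩ | ⟨i, j, hij, rfl⟩ |
      ⟨i, rfl⟩ | ⟨i, j, hij, rfl⟩ | ⟨i, j, hij, rfl⟩) <;>
    simp only [sbσ, sbτ, map_mul, map_inv, FreeGroup.lift_apply_of, Sum.elim_inl, Sum.elim_inr,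
      mul_inv_eq_one]
    · exact braid i j hij
    iterate 3 exact hij.elim (fun h => (comm i j h).eq) fun h => (comm j i h).eq.symm
    · exact braid i j hij
    · exact (braid i j hij).symm

lemma liftBraid_σ {G : Type*} [Group G] (a : Fin (n - 1) → G) braid comm (i : Fin (n - 1)) :
    liftBraid a braid comm (σ i) = a i :=
  PresentedGroup.toGroup.of _

variable (n) in
noncomputable def burauRep (R : Type*) [CommRing R] : SingularBraidGroup n →* GL (Fin n) R :=
  liftBraid (fun i => burauUnit ⟨i, by omega⟩ ⟨i + 1, by omega⟩)
    (fun i j hij => by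
      obtain ⟨j, hj⟩ := j
      subst hij
      exact burauUnit_braid (by grind) (by grind) (by grind))
    (fun i j hij => commute_burauUnit (by grind) (by grind) (by grind) (by grind))

lemma not_commute_sq_of_adjacent (i j : Fin (n - 1)) (hij : (i : ℕ) + 1 = j) :
    ¬ Commute (σ i ^ 2) (σ j ^ 2) := by
  intro h
  have h' := (h.map (burauRep n ℤ)).units_val
  simp only [map_pow, Units.val_pow_eq_pow_val, burauRep, liftBraid_σ, coe_burauUnit] at h'
  obtain ⟨j, hj⟩ := j
  subst hij
  exact nsmul_burauNil_mul_burauNil_ne (by grind) (by grind) (by grind)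
    (nsmul_mul_eq_of_commute_one_sub_sq (burauNil_mul_self _ _) (burauNil_mul_self _ _) h')

end SingularBraidGroup

lemma stdS_mul_self {n : ℕ} {R : Type*} [CommRing R] (t : R) {i : ℕ} (hi : i + 1 < n) :
    stdS n t i * stdS n t i =
      diagonal fun k : Fin n => if (k : ℕ) = i ∨ (k : ℕ) = i + 1 then t else 1 := by
  ext k l
  rw [mul_apply, Finset.sum_eq_single (Equiv.swap (⟨i, by omega⟩ : Fin n) ⟨i + 1, hi⟩ k)]
  · simp only [stdS, of_apply, diagonal_apply, Equiv.swap_apply_def, Fin.ext_iff]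
    split_ifs <;> simp_all
  · intro m _ hm
    simp only [stdS, of_apply, Equiv.swap_apply_def, Fin.ext_iff, ne_eq] at hm ⊢
    split_ifs at hm ⊢ <;> simp_all
  · simp

lemma commute_stdS_sq {n : ℕ} {R : Type*} [CommRing R] (t : R) {i j : ℕ} (hi : i + 1 < n)
    (hj : j + 1 < n) : Commute (stdS n t i ^ 2) (stdS n t j ^ 2) := by
  rw [sq, sq, stdS_mul_self t hi, stdS_mul_self t hj]
  exact commute_diagonal _ _

/-- For `n ≥ 3`, every representation of the singular braid group `SB_n` into
`GL_n(ℤ[t^{±1}])` extending the standard representation of `B_n` is unfaithful. -/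
theorem extension_standard_rep_SBn_unfaithful (n : ℕ) (hn : 3 ≤ n)
    (φ : SingularBraidGroup n →*
      GL (Fin n) (LaurentPolynomial ℤ))
    (hφ : ∀ i : Fin (n - 1),
      ((φ (PresentedGroup.of (Sum.inl i)) : GL (Fin n) (LaurentPolynomial ℤ)) :
        Matrix (Fin n) (Fin n) (LaurentPolynomial ℤ)) = stdS n (T 1) (i : ℕ)) :
    ¬ Function.Injective φ := by
  intro hinj
  refine SingularBraidGroup.not_commute_sq_of_adjacent ⟨0, by omega⟩ ⟨1, by omega⟩ rfl
    (Commute.of_map hinj ?_)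
  rw [map_pow, map_pow, ← Commute.units_val_iff, Units.val_pow_eq_pow_val,
    Units.val_pow_eq_pow_val, hφ, hφ]
  exact commute_stdS_sq (T 1) (by grind) (by grind)
end

section
/- Let R = ℤ[t^{±1}] be the ring of Laurent polynomials over ℤ and t ∈ R its distinguished variable. Let A ∈ M_2(R) be the matrix with rows (0, t) and (1, 0). Suppose B, V ∈ M_2(R) are such that B is invertible, A·B = B·A, and V·V = 1. Then there exist a, c ∈ R such that B is the matrix with rows (a, c·t) and (c, a), and moreover V = 1, or V = −1, or there exist p, q, r ∈ R with p² + q·r = 1 such that V is the matrix with rows (p, q) and (r, −p). -/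
open Matrix LaurentPolynomial

theorem Matrix.fin_two_exists_eq_of_mul_comm_companion {R : Type*} [CommRing R] (x : R)
    {M : Matrix (Fin 2) (Fin 2) R} (h : !![0, x; 1, 0] * M = M * !![0, x; 1, 0]) :
    ∃ a c : R, M = !![a, c * x; c, a] := by
  obtain ⟨a, b, c, d, rfl⟩ : ∃ a b c d, M = !![a, b; c, d] := ⟨_, _, _, _, M.eta_fin_two⟩
  obtain ⟨⟨hb, -⟩, hd, -⟩ : (x * c = b ∧ x * d = a * x) ∧ a = d ∧ b = c * x := by
    simpa [← Matrix.ext_iff, Fin.forall_fin_two] using h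
  exact ⟨a, c, by rw [← hb, ← hd, mul_comm]⟩

theorem Matrix.fin_two_cases_of_mul_self_eq_one {R : Type*} [CommRing R] [NoZeroDivisors R]
    {V : Matrix (Fin 2) (Fin 2) R} (hV : V * V = 1) :
    V = 1 ∨ V = -1 ∨ ∃ p q r : R, p ^ 2 + q * r = 1 ∧ V = !![p, q; r, -p] := by
  obtain ⟨p, q, r, s, rfl⟩ : ∃ p q r s, V = !![p, q; r, s] := ⟨_, _, _, _, V.eta_fin_two⟩
  obtain ⟨h00, h01, h10, h11⟩ : p * p + q * r = 1 ∧ p * q + q * s = 0 ∧ r * p + s * r = 0 ∧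
      r * q + s * s = 1 := by
    simpa [← Matrix.ext_iff, Fin.forall_fin_two, one_fin_two, and_assoc] using hV
  by_cases htr : p + s = 0
  · obtain rfl : s = -p := by linear_combination htr
    exact Or.inr (Or.inr ⟨p, q, r, by linear_combination h00, rfl⟩)
  -- a non-zero trace forces `V` to be scalar, with a square root of unity on the diagonal
  have cancel_trace {y z : R} (h : y * (p + s) = z * (p + s)) : y = z :=
    mul_right_cancel₀ htr h
  obtain rfl : q = 0 := cancel_trace (by linear_combination h01)
  obtain rfl : r = 0 := cancel_trace (by linear_combination h10)
  obtain rfl : p = s := cancel_trace (by linear_combination h00 - h11)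
  rw [one_fin_two]
  rcases mul_self_eq_one_iff.mp (by linear_combination h00 : p * p = 1) with rfl | rfl
  · exact Or.inl rfl
  · exact Or.inr (Or.inl (by simp))

theorem extension_standard_rep_VSB2_general
    (B V : Matrix (Fin 2) (Fin 2) (LaurentPolynomial ℤ))
    (hcomm : !![(0 : LaurentPolynomial ℤ), T 1; 1, 0] * B
        = B * !![(0 : LaurentPolynomial ℤ), T 1; 1, 0])
    (hV : V * V = 1) :
    (∃ a c : LaurentPolynomial ℤ, B = !![a, c * T 1; c, a]) ∧
    (V = 1 ∨ V = -1 ∨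
      ∃ p q r : LaurentPolynomial ℤ, p ^ 2 + q * r = 1 ∧ V = !![p, q; r, -p]) :=
  ⟨fin_two_exists_eq_of_mul_comm_companion _ hcomm, fin_two_cases_of_mul_self_eq_one hV⟩

/-- The form of all extensions of the standard representation of `B₂` to the virtual
singular braid group `VSB₂`: if `B` is invertible and commutes with the standard
matrix `A = !![0, t; 1, 0]` and `V² = 1`, then `B = !![a, c·t; c, a]` for some
`a, c`, and `V = 1`, `V = -1`, or `V = !![p, q; r, -p]` with `p² + q·r = 1`. -/
theorem extension_standard_rep_VSB2
    (B V : Matrix (Fin 2) (Fin 2) (LaurentPolynomial ℤ))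
    (hB : IsUnit B)
    (hcomm : !![(0 : LaurentPolynomial ℤ), T 1; 1, 0] * B
        = B * !![(0 : LaurentPolynomial ℤ), T 1; 1, 0])
    (hV : V * V = 1) :
    (∃ a c : LaurentPolynomial ℤ, B = !![a, c * T 1; c, a]) ∧
    (V = 1 ∨ V = -1 ∨
      ∃ p q r : LaurentPolynomial ℤ, p ^ 2 + q * r = 1 ∧ V = !![p, q; r, -p]) :=
  extension_standard_rep_VSB2_general B V hcomm hV
end
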